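/- Let G, H ⊆ {x : u_x > 2} ⊆ {1,…,n}. With C_S = ∑_{A ⊆ {1,…,n}} (k_{S\A} mod char F) · B_{A, S∩A, A}, one has C_G · C_H = (k_{G∩H} mod char F) · C_{G∪H}, where k_S = ∏_{x∈S}(u_x − 1). -/

import Mathlib

open Finset

variable {n : ℕ} {U : Fin n → Type*} [∀ i, Fintype (U i)] [∀ i, DecidableEq (U i)]
variable (F : Type*) [Field F]

/-- `D(y,z) = {i : y i ≠ z i}`. -/
def Dst (y z : ∀ i, U i) : Finset (Fin n) := univ.filter (fun i => y i ≠ z i)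

/-- Adjacency matrix of the relation indexed by `S`. -/
def adjMat (S : Finset (Fin n)) : Matrix (∀ i, U i) (∀ i, U i) F :=
  fun y z => if Dst y z = S then 1 else 0

/-- Dual idempotent with respect to the base point `x`. -/
def dualIdem (x : ∀ i, U i) (S : Finset (Fin n)) : Matrix (∀ i, U i) (∀ i, U i) F :=
  Matrix.diagonal (fun y => if Dst x y = S then 1 else 0)

/-- The Terwilliger `F`-algebra of the factorial scheme with base point `x`. -/
def TerwAlg (x : ∀ i, U i) : Subalgebra F (Matrix (∀ i, U i) (∀ i, U i) F) :=
  Algebra.adjoin F (Set.range (adjMat F) ∪ Set.range (dualIdem F x))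

/-- `B_{A,B,C} = ∑_{AΔC ⊆ b ⊆ B} E*_A A_b E*_C`. -/
def Bmat (x : ∀ i, U i) (A B C : Finset (Fin n)) : Matrix (∀ i, U i) (∀ i, U i) F :=
  ∑ b ∈ B.powerset.filter (fun b => symmDiff A C ⊆ b),
    dualIdem F x A * adjMat F b * dualIdem F x C

/-- `k_S = ∏_{x ∈ S} (u_x - 1)`. -/
def kval (u : Fin n → ℕ) (S : Finset (Fin n)) : ℕ := ∏ i ∈ S, (u i - 1)

/-- The central elements `C_S`. -/
def Cmat (u : Fin n → ℕ) (x : ∀ i, U i) (S : Finset (Fin n)) :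
    Matrix (∀ i, U i) (∀ i, U i) F :=
  ∑ A ∈ (univ : Finset (Finset (Fin n))), (kval u (S \ A) : F) • Bmat F x A (S ∩ A) A

@[simp] lemma mem_Dst {y z : ∀ i, U i} {i : Fin n} : i ∈ Dst y z ↔ y i ≠ z i := by
  simp [Dst]

lemma Bmat_apply (x : ∀ i, U i) (A B : Finset (Fin n)) (y z : ∀ i, U i) :
    Bmat F x A B A y z =
      if Dst x y = A ∧ Dst x z = A ∧ Dst y z ⊆ B then 1 else 0 := by
  unfold Bmat
  rw [Matrix.sum_apply]
  have hterm : ∀ b : Finset (Fin n),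
      ((dualIdem F x A * adjMat F b * dualIdem F x A :
          Matrix (∀ i, U i) (∀ i, U i) F)) y z =
        (if Dst x y = A then (1 : F) else 0) * ((if Dst y z = b then (1 : F) else 0) *
          (if Dst x z = A then (1 : F) else 0)) := by
    intro b
    simp only [dualIdem, adjMat, Matrix.mul_diagonal, Matrix.diagonal_mul, mul_assoc]
  rw [Finset.sum_congr rfl (fun b _ => hterm b), ← Finset.mul_sum, ← Finset.sum_mul]
  have : ∑ b ∈ B.powerset.filter (fun b => symmDiff A A ⊆ b),
      (if Dst y z = b then (1 : F) else 0) = if Dst y z ⊆ B then 1 else 0 := by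
    rw [Finset.filter_true_of_mem (fun b _ => by simp)]
    simp [Finset.sum_ite_eq, Finset.mem_powerset]
  rw [this]
  by_cases h1 : Dst x y = A <;> by_cases h2 : Dst x z = A <;>
    by_cases h3 : Dst y z ⊆ B <;> simp [h1, h2, h3]

lemma Cmat_apply (u : Fin n → ℕ) (x : ∀ i, U i) (S : Finset (Fin n)) (y z : ∀ i, U i) :
    Cmat F u x S y z =
      if Dst x z = Dst x y ∧ Dst y z ⊆ S ∩ Dst x y then (kval u (S \ Dst x y) : F) else 0 := by
  unfold Cmat
  rw [Matrix.sum_apply]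
  rw [Finset.sum_eq_single (Dst x y)]
  · rw [Matrix.smul_apply, Bmat_apply, smul_eq_mul]
    by_cases h1 : Dst x z = Dst x y <;> by_cases h2 : Dst y z ⊆ S ∩ Dst x y <;>
      simp [h1, h2]
  · intro A _ hA
    rw [Matrix.smul_apply, Bmat_apply, smul_eq_mul]
    rw [if_neg (fun h => hA h.1.symm), mul_zero]
  · intro h; exact absurd (Finset.mem_univ _) h

lemma kval_identity (u : Fin n → ℕ) (A G H : Finset (Fin n)) :
    kval u (G \ A) * kval u (H \ A) * kval u (A ∩ (G ∩ H)) =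
      kval u (G ∩ H) * kval u ((G ∪ H) \ A) := by
  unfold kval
  have h1 : (G \ A) ∪ (H \ A) = (G ∪ H) \ A := by
    ext i; simp [Finset.mem_union, Finset.mem_sdiff]; tauto
  have h2 : (G \ A) ∩ (H \ A) = (G ∩ H) \ A := by
    ext i; simp [Finset.mem_inter, Finset.mem_sdiff]; tauto
  have h3 : (G ∩ H) = (A ∩ (G ∩ H)) ∪ ((G ∩ H) \ A) := by
    ext i; simp [Finset.mem_inter, Finset.mem_sdiff, Finset.mem_union]; tauto
  have hd : Disjoint (A ∩ (G ∩ H)) ((G ∩ H) \ A) := by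
    rw [Finset.disjoint_left]; intro i hi hi'
    simp only [Finset.mem_inter, Finset.mem_sdiff] at hi hi'
    exact hi'.2 hi.1
  rw [← Finset.prod_union_inter, h1, h2]
  nth_rewrite 3 [h3]
  rw [Finset.prod_union hd]
  ring

lemma count_sum (u : Fin n → ℕ) (hu : ∀ i, Fintype.card (U i) = u i)
    (x : ∀ i, U i) (A G H : Finset (Fin n)) (y z : ∀ i, U i)
    (hy : Dst x y = A) (hz : Dst x z = A) :
    ∑ w : ∀ i, U i,
        (if Dst x w = A ∧ Dst y w ⊆ G ∩ A ∧ Dst w z ⊆ H ∩ A then (1 : F) else 0)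
      = (kval u (A ∩ (G ∩ H)) : F) * (if Dst y z ⊆ (G ∪ H) ∩ A then 1 else 0) := by
  have hA : ∀ i, i ∈ A ↔ x i ≠ y i := by
    intro i; rw [← hy]; simp
  have hA' : ∀ i, i ∈ A ↔ x i ≠ z i := by
    intro i; rw [← hz]; simp
  -- per-coordinate predicate
  have key : ∀ w : ∀ i, U i,
      (Dst x w = A ∧ Dst y w ⊆ G ∩ A ∧ Dst w z ⊆ H ∩ A) ↔
        ∀ i, ((x i ≠ w i ↔ i ∈ A) ∧ (y i ≠ w i → i ∈ G ∩ A) ∧ (w i ≠ z i → i ∈ H ∩ A)) := by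
    intro w
    constructor
    · rintro ⟨h1, h2, h3⟩ i
      refine ⟨?_, fun h => h2 (by simpa using h), fun h => h3 (by simpa using h)⟩
      rw [← h1]; simp
    · intro h
      refine ⟨?_, ?_, ?_⟩
      · ext i; simpa using (h i).1
      · intro i hi; exact (h i).2.1 (by simpa using hi)
      · intro i hi; exact (h i).2.2 (by simpa using hi)
  have step1 : ∀ w : ∀ i, U i,
      (if Dst x w = A ∧ Dst y w ⊆ G ∩ A ∧ Dst w z ⊆ H ∩ A then (1 : F) else 0) =
        ∏ i, (if (x i ≠ w i ↔ i ∈ A) ∧ (y i ≠ w i → i ∈ G ∩ A) ∧ (w i ≠ z i → i ∈ H ∩ A)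
          then (1 : F) else 0) := by
    intro w
    rw [Finset.prod_boole]
    by_cases h : ∀ i, ((x i ≠ w i ↔ i ∈ A) ∧ (y i ≠ w i → i ∈ G ∩ A) ∧
        (w i ≠ z i → i ∈ H ∩ A))
    · rw [if_pos ((key w).mpr h), if_pos (fun i _ => h i)]
    · rw [if_neg (fun hc => h ((key w).mp hc)),
        if_neg (fun hc => h (fun i => hc i (Finset.mem_univ i)))]
  rw [Finset.sum_congr rfl (fun w _ => step1 w)]
  have hswap := Finset.prod_univ_sum (fun i => (univ : Finset (U i)))
    (fun i a => if (x i ≠ a ↔ i ∈ A) ∧ (y i ≠ a → i ∈ G ∩ A) ∧ (a ≠ z i → i ∈ H ∩ A)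
      then (1 : F) else 0)
  rw [Fintype.piFinset_univ] at hswap
  rw [← hswap]
  have hfact : ∀ i : Fin n,
      (∑ a : U i, if (x i ≠ a ↔ i ∈ A) ∧ (y i ≠ a → i ∈ G ∩ A) ∧ (a ≠ z i → i ∈ H ∩ A)
          then (1 : F) else 0) =
        (if i ∈ A ∩ (G ∩ H) then ((u i - 1 : ℕ) : F) else 1) *
          (if i ∈ A \ (G ∪ H) then (if y i = z i then (1 : F) else 0) else 1) := by
    intro i
    by_cases hiA : i ∈ A
    · by_cases hiG : i ∈ G
      · by_cases hiH : i ∈ H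
        · -- free coordinate: u i - 1 choices
          have hQ : ∀ a : U i,
              ((x i ≠ a ↔ i ∈ A) ∧ (y i ≠ a → i ∈ G ∩ A) ∧ (a ≠ z i → i ∈ H ∩ A)) ↔
                x i ≠ a := by
            intro a
            simp [hiA, hiG, hiH, Finset.mem_inter]
          rw [Finset.sum_congr rfl (fun a _ => if_congr (hQ a) rfl rfl)]
          have : ∑ a : U i, (if x i ≠ a then (1 : F) else 0) =
              ((Finset.univ.filter fun a : U i => x i ≠ a).card : F) := by
            rw [Finset.sum_boole]
          rw [this, Finset.filter_ne, Finset.card_erase_of_mem (Finset.mem_univ _),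
            Finset.card_univ, hu i]
          simp [hiA, hiG, hiH, Finset.mem_inter, Finset.mem_sdiff, Finset.mem_union]
        · -- forced a = z i
          have hxz : x i ≠ z i := (hA' i).mp hiA
          have hQ : ∀ a : U i,
              ((x i ≠ a ↔ i ∈ A) ∧ (y i ≠ a → i ∈ G ∩ A) ∧ (a ≠ z i → i ∈ H ∩ A)) ↔
                a = z i := by
            intro a
            constructor
            · rintro ⟨_, _, h3⟩
              by_contra hne; exact hiH (Finset.mem_inter.mp (h3 hne)).1
            · rintro rfl
              exact ⟨iff_of_true hxz hiA, fun _ => Finset.mem_inter.mpr ⟨hiG, hiA⟩,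
                fun h => absurd rfl h⟩
          rw [Finset.sum_congr rfl (fun a _ => if_congr (hQ a) rfl rfl)]
          simp [Finset.sum_ite_eq', hiA, hiG, hiH, Finset.mem_inter, Finset.mem_sdiff,
            Finset.mem_union]
      · by_cases hiH : i ∈ H
        · -- forced a = y i
          have hxy : x i ≠ y i := (hA i).mp hiA
          have hQ : ∀ a : U i,
              ((x i ≠ a ↔ i ∈ A) ∧ (y i ≠ a → i ∈ G ∩ A) ∧ (a ≠ z i → i ∈ H ∩ A)) ↔
                a = y i := by
            intro a
            constructor
            · rintro ⟨_, h2, _⟩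
              by_contra hne
              exact hiG (Finset.mem_inter.mp (h2 (fun h => hne h.symm))).1
            · rintro rfl
              exact ⟨iff_of_true hxy hiA, fun h => absurd rfl h,
                fun _ => Finset.mem_inter.mpr ⟨hiH, hiA⟩⟩
          rw [Finset.sum_congr rfl (fun a _ => if_congr (hQ a) rfl rfl)]
          simp [Finset.sum_ite_eq', hiA, hiG, hiH, Finset.mem_inter, Finset.mem_sdiff,
            Finset.mem_union]
        · -- forced a = y i = z i
          have hxy : x i ≠ y i := (hA i).mp hiA
          have hQ : ∀ a : U i,
              ((x i ≠ a ↔ i ∈ A) ∧ (y i ≠ a → i ∈ G ∩ A) ∧ (a ≠ z i → i ∈ H ∩ A)) ↔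
                (a = y i ∧ a = z i) := by
            intro a
            constructor
            · rintro ⟨_, h2, h3⟩
              constructor
              · by_contra hne
                exact hiG (Finset.mem_inter.mp (h2 (fun h => hne h.symm))).1
              · by_contra hne
                exact hiH (Finset.mem_inter.mp (h3 hne)).1
            · rintro ⟨rfl, h⟩
              exact ⟨iff_of_true hxy hiA, fun hc => absurd rfl hc,
                fun hc => absurd h hc⟩
          rw [Finset.sum_congr rfl (fun a _ => if_congr (hQ a) rfl rfl)]
          by_cases hyz : y i = z i
          · have hQQ : ∀ a : U i, (a = y i ∧ a = z i) ↔ a = z i := by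
              intro a; rw [hyz, and_self]
            rw [Finset.sum_congr rfl (fun a _ => if_congr (hQQ a) rfl rfl)]
            simp [Finset.sum_ite_eq', hiA, hiG, hiH, Finset.mem_inter,
              Finset.mem_sdiff, Finset.mem_union, hyz]
          · have hQQ : ∀ a : U i, ¬(a = y i ∧ a = z i) := by
              rintro a ⟨rfl, h⟩; exact hyz h
            simp [hQQ, hiA, hiG, hiH, Finset.mem_inter, Finset.mem_sdiff,
              Finset.mem_union, hyz]
    · -- i ∉ A : forced a = x i
      have hxy : x i = y i := by
        by_contra h; exact hiA ((hA i).mpr h)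
      have hxz : x i = z i := by
        by_contra h; exact hiA ((hA' i).mpr h)
      have hQ : ∀ a : U i,
          ((x i ≠ a ↔ i ∈ A) ∧ (y i ≠ a → i ∈ G ∩ A) ∧ (a ≠ z i → i ∈ H ∩ A)) ↔
            a = x i := by
        intro a
        constructor
        · rintro ⟨h1, _, _⟩
          by_contra hne
          exact hiA (h1.mp (fun h => hne h.symm))
        · rintro rfl
          exact ⟨iff_of_false (fun h => h rfl) hiA, fun h => absurd hxy.symm h,
            fun h => absurd hxz h⟩
      rw [Finset.sum_congr rfl (fun a _ => if_congr (hQ a) rfl rfl)]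
      simp [Finset.sum_ite_eq', hiA, Finset.mem_inter, Finset.mem_sdiff]
  rw [Finset.prod_congr rfl (fun i _ => hfact i), Finset.prod_mul_distrib,
    Finset.prod_ite_mem, Finset.prod_ite_mem, Finset.univ_inter, Finset.univ_inter]
  have hleft : ∏ i ∈ A ∩ (G ∩ H), ((u i - 1 : ℕ) : F) = (kval u (A ∩ (G ∩ H)) : F) := by
    rw [kval, Nat.cast_prod]
  rw [hleft, Finset.prod_boole]
  congr 1
  have hDyz : Dst y z ⊆ A := by
    intro i hi
    simp only [mem_Dst] at hi
    by_cases h : x i ≠ y i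
    · exact (hA i).mpr h
    · push_neg at h
      exact (hA' i).mpr (fun hc => hi (h.symm ▸ hc))
  have : (∀ i ∈ A \ (G ∪ H), y i = z i) ↔ Dst y z ⊆ (G ∪ H) ∩ A := by
    constructor
    · intro h i hi
      have hiA := hDyz hi
      simp only [mem_Dst] at hi
      rw [Finset.mem_inter]
      refine ⟨?_, hiA⟩
      by_contra hc
      exact hi (h i (Finset.mem_sdiff.mpr ⟨hiA, hc⟩))
    · intro h i hi
      rw [Finset.mem_sdiff] at hi
      by_contra hc
      have : i ∈ Dst y z := mem_Dst.mpr hc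
      exact hi.2 (Finset.mem_inter.mp (h this)).1
  by_cases hc : Dst y z ⊆ (G ∪ H) ∩ A
  · rw [if_pos hc, if_pos (this.mpr hc)]
  · rw [if_neg hc, if_neg (fun hh => hc (this.mp hh))]

theorem stmt_14 (hn : 1 ≤ n) (u : Fin n → ℕ) (hu : ∀ i, Fintype.card (U i) = u i)
    (h2 : ∀ i, 2 ≤ u i) (x : ∀ i, U i) (G H : Finset (Fin n))
    (hG : G ⊆ univ.filter (fun i => 2 < u i))
    (hH : H ⊆ univ.filter (fun i => 2 < u i)) :
    Cmat F u x G * Cmat F u x H = (kval u (G ∩ H) : F) • Cmat F u x (G ∪ H) := by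
  ext y z
  rw [Matrix.mul_apply, Matrix.smul_apply, Cmat_apply, smul_eq_mul]
  set A := Dst x y with hAdef
  by_cases hz : Dst x z = A
  · -- main case
    have hterm : ∀ w : ∀ i, U i,
        Cmat F u x G y w * Cmat F u x H w z =
          ((kval u (G \ A) : F) * (kval u (H \ A) : F)) *
            (if Dst x w = A ∧ Dst y w ⊆ G ∩ A ∧ Dst w z ⊆ H ∩ A then (1 : F) else 0) := by
      intro w
      rw [Cmat_apply, Cmat_apply]
      by_cases hw : Dst x w = A
      · rw [hw]
        by_cases h1 : Dst y w ⊆ G ∩ A <;> by_cases h2' : Dst w z ⊆ H ∩ A <;>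
          simp [hz, h1, h2', hw, ← hAdef]
      · simp [hw, fun h : Dst x w = Dst x y => hw h, ← hAdef]
    rw [Finset.sum_congr rfl (fun w _ => hterm w), ← Finset.mul_sum,
      count_sum F u hu x A G H y z rfl hz]
    by_cases hsub : Dst y z ⊆ (G ∪ H) ∩ A
    · rw [if_pos hsub, if_pos ⟨hz, hsub⟩]
      have hid : ((kval u (G \ A) * kval u (H \ A) * kval u (A ∩ (G ∩ H)) : ℕ) : F) =
          ((kval u (G ∩ H) * kval u ((G ∪ H) \ A) : ℕ) : F) := by
        exact_mod_cast congrArg (Nat.cast (R := F)) (kval_identity u A G H)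
      push_cast at hid
      linear_combination hid
    · rw [if_neg hsub, if_neg (fun h => hsub h.2)]
      ring
  · -- Dst x z ≠ Dst x y : both sides vanish
    have hterm : ∀ w : ∀ i, U i, Cmat F u x G y w * Cmat F u x H w z = 0 := by
      intro w
      rw [Cmat_apply, Cmat_apply]
      by_cases hw : Dst x w = A
      · have : ¬(Dst x z = Dst x w) := by rw [hw]; exact hz
        simp [this]
      · simp [fun h : Dst x w = Dst x y => hw h, hw, ← hAdef]
    rw [Finset.sum_congr rfl (fun w _ => hterm w)]
    simp [hz]
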